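/- arXiv:2603.14142 — 3 statements merged into one kernel-verified Lean document; each statement's English description precedes it below -/
import Mathlib

section
/- Let M be the double star block matrix [[0, xᵀ, a, 0],[y, 0, 0, 0],[b, 0, 0, zᵀ],[0, 0, w, 0]] with s = x*x, u = y*y, t = z*z, v = w*w all nonzero, and let M† be its Moore–Penrose inverse. Then M†M = diag(1, s⁻¹ x̄ xᵀ, 1, t⁻¹ z̄ zᵀ) and MM† = diag(1, u⁻¹ y y*, 1, v⁻¹ w w*) in block diagonal form. -/
open Matrix BigOperators

noncomputable section

abbrev Idx (m n : ℕ) := (Unit ⊕ Fin m) ⊕ (Unit ⊕ Fin n)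

/-- 4×4 block builder for matrices indexed by a double star digraph vertex set:
the blocks correspond to the first center, the first star's leaves, the second
center and the second star's leaves, in this order. -/
def blk {m n : ℕ}
    (A11 : ℂ) (A12 : Fin m → ℂ) (A13 : ℂ) (A14 : Fin n → ℂ)
    (A21 : Fin m → ℂ) (A22 : Fin m → Fin m → ℂ) (A23 : Fin m → ℂ) (A24 : Fin m → Fin n → ℂ)
    (A31 : ℂ) (A32 : Fin m → ℂ) (A33 : ℂ) (A34 : Fin n → ℂ)
    (A41 : Fin n → ℂ) (A42 : Fin n → Fin m → ℂ) (A43 : Fin n → ℂ) (A44 : Fin n → Fin n → ℂ) :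
    Matrix (Idx m n) (Idx m n) ℂ :=
  Matrix.of fun i j =>
    match i, j with
    | .inl (.inl _), .inl (.inl _) => A11
    | .inl (.inl _), .inl (.inr k) => A12 k
    | .inl (.inl _), .inr (.inl _) => A13
    | .inl (.inl _), .inr (.inr k) => A14 k
    | .inl (.inr i'), .inl (.inl _) => A21 i'
    | .inl (.inr i'), .inl (.inr k) => A22 i' k
    | .inl (.inr i'), .inr (.inl _) => A23 i'
    | .inl (.inr i'), .inr (.inr k) => A24 i' k
    | .inr (.inl _), .inl (.inl _) => A31
    | .inr (.inl _), .inl (.inr k) => A32 k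
    | .inr (.inl _), .inr (.inl _) => A33
    | .inr (.inl _), .inr (.inr k) => A34 k
    | .inr (.inr i'), .inl (.inl _) => A41 i'
    | .inr (.inr i'), .inl (.inr k) => A42 i' k
    | .inr (.inr i'), .inr (.inl _) => A43 i'
    | .inr (.inr i'), .inr (.inr k) => A44 i' k

/-- The canonical matrix `[[0, xᵀ, a, 0],[y, 0, 0, 0],[b, 0, 0, zᵀ],[0, 0, w, 0]]`
associated with a double star digraph. -/
def dsM {m n : ℕ} (a b : ℂ) (x y : Fin m → ℂ) (z w : Fin n → ℂ) :
    Matrix (Idx m n) (Idx m n) ℂ :=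
  blk 0 x a (fun _ => 0)
      y (fun _ _ => 0) (fun _ => 0) (fun _ _ => 0)
      b (fun _ => 0) 0 z
      (fun _ => 0) (fun _ _ => 0) w (fun _ _ => 0)

/-- `xᵀy`. -/
def dotT {k : ℕ} (x y : Fin k → ℂ) : ℂ := ∑ i, x i * y i

/-- `x*x = ∑ conj xᵢ · xᵢ`. -/
def gram {k : ℕ} (x : Fin k → ℂ) : ℂ := ∑ i, star (x i) * x i


/-!
Multiply block by block. The centre entries of both products are normalisations such as
`u⁻¹ y*y = 1`, and the two corner blocks
`-s⁻¹av⁻¹ x̄w*`, `-t⁻¹bu⁻¹ z̄y*` of `M†` are exactly what cancels the contributions of the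
entries `a` and `b` of `M` to the off-diagonal blocks.
-/

def dsMPinv {m n : ℕ} (a b : ℂ) (x y : Fin m → ℂ) (z w : Fin n → ℂ) :
    Matrix (Idx m n) (Idx m n) ℂ :=
  blk 0 (fun i => (gram y)⁻¹ * star (y i)) 0 (fun _ => 0)
    (fun i => (gram x)⁻¹ * star (x i)) (fun _ _ => 0) (fun _ => 0)
      (fun i j => -((gram x)⁻¹ * a * (gram w)⁻¹) * star (x i) * star (w j))
    0 (fun _ => 0) 0 (fun j => (gram w)⁻¹ * star (w j))
    (fun _ => 0) (fun i j => -((gram z)⁻¹ * b * (gram y)⁻¹) * star (z i) * star (y j))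
      (fun i => (gram z)⁻¹ * star (z i)) (fun _ _ => 0)

def blkDiag {m n : ℕ} (P : Fin m → Fin m → ℂ) (Q : Fin n → Fin n → ℂ) :
    Matrix (Idx m n) (Idx m n) ℂ :=
  blk 1 (fun _ => 0) 0 (fun _ => 0)
    (fun _ => 0) P (fun _ => 0) (fun _ _ => 0)
    0 (fun _ => 0) 1 (fun _ => 0)
    (fun _ => 0) (fun _ _ => 0) (fun _ => 0) Q

theorem sum_mul_star_mul_self {k : ℕ} (c : ℂ) (f : Fin k → ℂ) :
    ∑ i, c * star (f i) * f i = c * gram f := by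
  simp only [_root_.gram, Finset.mul_sum, mul_assoc]

theorem sum_mul_mul_star {k : ℕ} (c : ℂ) (f : Fin k → ℂ) :
    ∑ i, f i * (c * star (f i)) = c * gram f := by
  rw [← sum_mul_star_mul_self]
  exact Finset.sum_congr rfl fun i _ => by ring

theorem sum_mul_mul_star_mul {k : ℕ} (c d : ℂ) (f : Fin k → ℂ) :
    ∑ i, f i * (c * star (f i) * d) = c * gram f * d := by
  rw [← sum_mul_star_mul_self, Finset.sum_mul]
  exact Finset.sum_congr rfl fun i _ => by ring

theorem dsMPinv_mul_dsM {m n : ℕ} (a b : ℂ) (x y : Fin m → ℂ) (z w : Fin n → ℂ)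
    (hu : gram y ≠ 0) (hv : gram w ≠ 0) :
    dsMPinv a b x y z w * dsM a b x y z w =
      blkDiag (fun i j => (gram x)⁻¹ * star (x i) * x j)
        (fun i j => (gram z)⁻¹ * star (z i) * z j) := by
  ext (((_ | i) | (_ | i))) (((_ | j) | (_ | j))) <;>
    simp only [dsMPinv, dsM, blkDiag, blk, mul_apply, of_apply, Fintype.sum_sum_type,
      Fintype.sum_unique, mul_zero, zero_mul, add_zero, zero_add, Finset.sum_const_zero,
      neg_mul, Finset.sum_neg_distrib, sum_mul_star_mul_self] <;>
    field_simp <;> ring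

theorem dsM_mul_dsMPinv {m n : ℕ} (a b : ℂ) (x y : Fin m → ℂ) (z w : Fin n → ℂ)
    (hs : gram x ≠ 0) (ht : gram z ≠ 0) :
    dsM a b x y z w * dsMPinv a b x y z w =
      blkDiag (fun i j => (gram y)⁻¹ * y i * star (y j))
        (fun i j => (gram w)⁻¹ * w i * star (w j)) := by
  ext (((_ | i) | (_ | i))) (((_ | j) | (_ | j))) <;>
    simp only [dsMPinv, dsM, blkDiag, blk, mul_apply, of_apply, Fintype.sum_sum_type,
      Fintype.sum_unique, mul_zero, zero_mul, add_zero, zero_add, Finset.sum_const_zero,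
      neg_mul, mul_neg, neg_zero, Finset.sum_neg_distrib, sum_mul_mul_star,
      sum_mul_mul_star_mul] <;>
    field_simp <;> ring

theorem dsM_projectors_general {m n : ℕ} (a b : ℂ)
    (x y : Fin m → ℂ) (z w : Fin n → ℂ)
    (hs : gram x ≠ 0) (hu : gram y ≠ 0) (ht : gram z ≠ 0) (hv : gram w ≠ 0) :
    letI M := dsM a b x y z w
    letI N := blk 0 (fun i => (gram y)⁻¹ * star (y i)) 0 (fun _ => 0)
        (fun i => (gram x)⁻¹ * star (x i)) (fun _ _ => 0) (fun _ => 0)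
          (fun i j => -((gram x)⁻¹ * a * (gram w)⁻¹) * star (x i) * star (w j))
        0 (fun _ => 0) 0 (fun j => (gram w)⁻¹ * star (w j))
        (fun _ => 0) (fun i j => -((gram z)⁻¹ * b * (gram y)⁻¹) * star (z i) * star (y j))
          (fun i => (gram z)⁻¹ * star (z i)) (fun _ _ => 0)
    N * M = blk 1 (fun _ => 0) 0 (fun _ => 0)
        (fun _ => 0) (fun i j => (gram x)⁻¹ * star (x i) * x j) (fun _ => 0) (fun _ _ => 0)
        0 (fun _ => 0) 1 (fun _ => 0)
        (fun _ => 0) (fun _ _ => 0) (fun _ => 0)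
          (fun i j => (gram z)⁻¹ * star (z i) * z j) ∧
    M * N = blk 1 (fun _ => 0) 0 (fun _ => 0)
        (fun _ => 0) (fun i j => (gram y)⁻¹ * y i * star (y j)) (fun _ => 0) (fun _ _ => 0)
        0 (fun _ => 0) 1 (fun _ => 0)
        (fun _ => 0) (fun _ _ => 0) (fun _ => 0)
          (fun i j => (gram w)⁻¹ * w i * star (w j)) :=
  ⟨dsMPinv_mul_dsM a b x y z w hu hv, dsM_mul_dsMPinv a b x y z w hs ht⟩

theorem dsM_projectors {m n : ℕ} (a b : ℂ) (ha : a ≠ 0) (hb : b ≠ 0)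
    (x y : Fin m → ℂ) (z w : Fin n → ℂ)
    (hs : gram x ≠ 0) (hu : gram y ≠ 0) (ht : gram z ≠ 0) (hv : gram w ≠ 0) :
    letI M := dsM a b x y z w
    letI N := blk 0 (fun i => (gram y)⁻¹ * star (y i)) 0 (fun _ => 0)
        (fun i => (gram x)⁻¹ * star (x i)) (fun _ _ => 0) (fun _ => 0)
          (fun i j => -((gram x)⁻¹ * a * (gram w)⁻¹) * star (x i) * star (w j))
        0 (fun _ => 0) 0 (fun j => (gram w)⁻¹ * star (w j))
        (fun _ => 0) (fun i j => -((gram z)⁻¹ * b * (gram y)⁻¹) * star (z i) * star (y j))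
          (fun i => (gram z)⁻¹ * star (z i)) (fun _ _ => 0)
    N * M = blk 1 (fun _ => 0) 0 (fun _ => 0)
        (fun _ => 0) (fun i j => (gram x)⁻¹ * star (x i) * x j) (fun _ => 0) (fun _ _ => 0)
        0 (fun _ => 0) 1 (fun _ => 0)
        (fun _ => 0) (fun _ _ => 0) (fun _ => 0)
          (fun i j => (gram z)⁻¹ * star (z i) * z j) ∧
    M * N = blk 1 (fun _ => 0) 0 (fun _ => 0)
        (fun _ => 0) (fun i j => (gram y)⁻¹ * y i * star (y j)) (fun _ => 0) (fun _ _ => 0)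
        0 (fun _ => 0) 1 (fun _ => 0)
        (fun _ => 0) (fun _ _ => 0) (fun _ => 0)
          (fun i j => (gram w)⁻¹ * w i * star (w j)) :=
  dsM_projectors_general a b x y z w hs hu ht hv
end
end

section
/- Let M be the double star block matrix with xᵀy = 0 = zᵀw and a, b ≠ 0. Then M² = [[ab, 0, 0, a zᵀ],[0, y xᵀ, a y, 0],[0, b xᵀ, ab, 0],[b w, 0, 0, w zᵀ]], and (M²)* M² is permutation similar to the block diagonal matrix diag(r·A, h·B), where r = aā + w*w, h = bb̄ + y*y, A = [[bb̄, b̄zᵀ],[bz̄, z̄zᵀ]] and B = [[aā, āxᵀ],[ax̄, x̄xᵀ]]. -/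
open Matrix BigOperators

/-! Order the vertices as (first center, second leaves | second center, first leaves). Then `M`
becomes `[[0, P], [Q, 0]]` with `P = [[a, xᵀ], [w, 0]]` and `Q = [[b, zᵀ], [y, 0]]`, so
`M² = diag(P Q, Q P)`, and `xᵀy = 0 = zᵀw` makes both blocks rank one:
`P Q = (a, w)(b, zᵀ)` and `Q P = (b, y)(a, xᵀ)`. For a rank-one matrix,
`(u vᵀ)* (u vᵀ) = (u* u) v̄ vᵀ`, which gives `r • A` and `h • B`. -/

namespace Matrix

variable {R k l m n : Type*}

def starBlock [Zero R] (c : R) (u : m → R) (v : n → R) : Matrix (Unit ⊕ n) (Unit ⊕ m) R :=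
  fromBlocks (of fun _ _ => c) (of fun _ j => u j) (of fun i _ => v i) 0

theorem starBlock_mul_starBlock [Semiring R] [Fintype m] (a b : R) (x y : m → R) (z w : n → R)
    (hxy : x ⬝ᵥ y = 0) :
    starBlock a x w * starBlock b z y =
      vecMulVec (Sum.elim (fun _ => a) w) (Sum.elim (fun _ => b) z) := by
  rw [dotProduct] at hxy
  ext (_ | i) (_ | j) <;> simp [starBlock, mul_apply, vecMulVec_apply, hxy]

theorem fromBlocks_zero_zero_sq [Semiring R] [Fintype m] [Fintype n] [DecidableEq m]
    [DecidableEq n] (P : Matrix m n R) (Q : Matrix n m R) :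
    fromBlocks 0 P Q 0 ^ 2 = fromBlocks (P * Q) 0 0 (Q * P) := by
  simp [sq, fromBlocks_multiply]

theorem fromBlocks_diag_conjTranspose_mul_self [Semiring R] [StarRing R] [Fintype k] [Fintype l]
    (P : Matrix k m R) (Q : Matrix l n R) :
    (fromBlocks P 0 0 Q)ᴴ * fromBlocks P 0 0 Q = fromBlocks (Pᴴ * P) 0 0 (Qᴴ * Q) := by
  simp [fromBlocks_conjTranspose, fromBlocks_multiply]

theorem vecMulVec_conjTranspose_mul_self [CommSemiring R] [StarRing R] [Fintype m]
    (u : m → R) (v : n → R) :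
    (vecMulVec u v)ᴴ * vecMulVec u v = (star u ⬝ᵥ u) • vecMulVec (star v) v := by
  rw [conjTranspose_vecMulVec, vecMulVec_mul_vecMulVec]
  ext
  simp [vecMulVec_apply, mul_left_comm]

theorem vecMulVec_star_sumElim_self [CommSemiring R] [StarRing R] (c : R) (v : n → R) :
    vecMulVec (star (Sum.elim (fun _ : Unit => c) v)) (Sum.elim (fun _ : Unit => c) v) =
      fromBlocks (of fun _ _ => c * star c) (of fun _ j => star c * v j)
        (of fun i _ => c * star (v i)) (of fun i j => star (v i) * v j) := by
  ext (_ | i) (_ | j) <;> simp [vecMulVec_apply, mul_comm]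

end Matrix

theorem star_sumElim_dotProduct_self {n : ℕ} (c : ℂ) (v : Fin n → ℂ) :
    star (Sum.elim (fun _ : Unit => c) v) ⬝ᵥ Sum.elim (fun _ => c) v =
      c * star c + _root_.gram v := by
  simp [dotProduct, _root_.gram, mul_comm]

def Idx.swapLeaves (m n : ℕ) : Idx m n ≃ (Unit ⊕ Fin n) ⊕ (Unit ⊕ Fin m) where
  toFun
    | .inl (.inl u) => .inl (.inl u)
    | .inl (.inr i) => .inr (.inr i)
    | .inr (.inl u) => .inr (.inl u)
    | .inr (.inr j) => .inl (.inr j)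
  invFun
    | .inl (.inl u) => .inl (.inl u)
    | .inl (.inr j) => .inr (.inr j)
    | .inr (.inl u) => .inr (.inl u)
    | .inr (.inr i) => .inl (.inr i)
  left_inv := by rintro ((_ | _) | (_ | _)) <;> rfl
  right_inv := by rintro ((_ | _) | (_ | _)) <;> rfl

section

variable {m n : ℕ} (a b : ℂ) (x y : Fin m → ℂ) (z w : Fin n → ℂ)

theorem dsM_submatrix_swapLeaves :
    (dsM a b x y z w).submatrix (Idx.swapLeaves m n).symm (Idx.swapLeaves m n).symm =
      fromBlocks 0 (starBlock a x w) (starBlock b z y) 0 := by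
  ext ((_ | _) | (_ | _)) ((_ | _) | (_ | _)) <;> rfl

variable {a b x y z w}

theorem dsM_sq_submatrix_swapLeaves (hxy : dotT x y = 0) (hzw : dotT z w = 0) :
    (dsM a b x y z w ^ 2).submatrix (Idx.swapLeaves m n).symm (Idx.swapLeaves m n).symm =
      fromBlocks (vecMulVec (Sum.elim (fun _ => a) w) (Sum.elim (fun _ => b) z)) 0 0
        (vecMulVec (Sum.elim (fun _ => b) y) (Sum.elim (fun _ => a) x)) := by
  rw [sq, ← submatrix_mul_equiv (e₂ := (Idx.swapLeaves m n).symm), dsM_submatrix_swapLeaves,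
    ← sq, fromBlocks_zero_zero_sq, starBlock_mul_starBlock _ _ _ _ _ _ hxy,
    starBlock_mul_starBlock _ _ _ _ _ _ hzw]

theorem dsM_sq (hxy : dotT x y = 0) (hzw : dotT z w = 0) :
    dsM a b x y z w ^ 2 = blk (a * b) (fun _ => 0) 0 (fun j => a * z j)
        (fun _ => 0) (fun i j => y i * x j) (fun i => a * y i) (fun _ _ => 0)
        0 (fun j => b * x j) (a * b) (fun _ => 0)
        (fun i => b * w i) (fun _ _ => 0) (fun _ => 0) (fun i j => w i * z j) := by
  apply (reindex (Idx.swapLeaves m n) (Idx.swapLeaves m n)).injective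
  rw [reindex_apply, dsM_sq_submatrix_swapLeaves hxy hzw]
  ext ((_ | _) | (_ | _)) ((_ | _) | (_ | _)) <;>
    simp [blk, Idx.swapLeaves, vecMulVec_apply, mul_comm]

end

theorem dsM_sq_gram_perm_similar_general {m n : ℕ} (a b : ℂ)
    (x y : Fin m → ℂ) (z w : Fin n → ℂ)
    (hxy : dotT x y = 0) (hzw : dotT z w = 0) :
    letI M := dsM a b x y z w
    letI r := a * star a + gram w
    letI h := b * star b + gram y
    letI A : Matrix (Unit ⊕ Fin n) (Unit ⊕ Fin n) ℂ :=
      Matrix.fromBlocks (Matrix.of fun _ _ => b * star b)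
        (Matrix.of fun _ j => star b * z j)
        (Matrix.of fun i _ => b * star (z i))
        (Matrix.of fun i j => star (z i) * z j)
    letI B : Matrix (Unit ⊕ Fin m) (Unit ⊕ Fin m) ℂ :=
      Matrix.fromBlocks (Matrix.of fun _ _ => a * star a)
        (Matrix.of fun _ j => star a * x j)
        (Matrix.of fun i _ => a * star (x i))
        (Matrix.of fun i j => star (x i) * x j)
    M ^ 2 = blk (a * b) (fun _ => 0) 0 (fun j => a * z j)
        (fun _ => 0) (fun i j => y i * x j) (fun i => a * y i) (fun _ _ => 0)
        0 (fun j => b * x j) (a * b) (fun _ => 0)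
        (fun i => b * w i) (fun _ _ => 0) (fun _ => 0) (fun i j => w i * z j) ∧
    ∃ e : Idx m n ≃ (Unit ⊕ Fin n) ⊕ (Unit ⊕ Fin m),
      ((M ^ 2)ᴴ * M ^ 2).submatrix e.symm e.symm =
        Matrix.fromBlocks (r • A) 0 0 (h • B) := by
  refine ⟨dsM_sq hxy hzw, Idx.swapLeaves m n, ?_⟩
  rw [← submatrix_mul_equiv (e₂ := (Idx.swapLeaves m n).symm), ← conjTranspose_submatrix,
    dsM_sq_submatrix_swapLeaves hxy hzw, fromBlocks_diag_conjTranspose_mul_self,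
    vecMulVec_conjTranspose_mul_self, vecMulVec_conjTranspose_mul_self,
    star_sumElim_dotProduct_self, star_sumElim_dotProduct_self,
    vecMulVec_star_sumElim_self, vecMulVec_star_sumElim_self]

theorem dsM_sq_gram_perm_similar {m n : ℕ} (a b : ℂ) (ha : a ≠ 0) (hb : b ≠ 0)
    (x y : Fin m → ℂ) (z w : Fin n → ℂ)
    (hxy : dotT x y = 0) (hzw : dotT z w = 0) :
    letI M := dsM a b x y z w
    letI r := a * star a + gram w
    letI h := b * star b + gram y
    letI A : Matrix (Unit ⊕ Fin n) (Unit ⊕ Fin n) ℂ :=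
      Matrix.fromBlocks (Matrix.of fun _ _ => b * star b)
        (Matrix.of fun _ j => star b * z j)
        (Matrix.of fun i _ => b * star (z i))
        (Matrix.of fun i j => star (z i) * z j)
    letI B : Matrix (Unit ⊕ Fin m) (Unit ⊕ Fin m) ℂ :=
      Matrix.fromBlocks (Matrix.of fun _ _ => a * star a)
        (Matrix.of fun _ j => star a * x j)
        (Matrix.of fun i _ => a * star (x i))
        (Matrix.of fun i j => star (x i) * x j)
    M ^ 2 = blk (a * b) (fun _ => 0) 0 (fun j => a * z j)
        (fun _ => 0) (fun i j => y i * x j) (fun i => a * y i) (fun _ _ => 0)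
        0 (fun j => b * x j) (a * b) (fun _ => 0)
        (fun i => b * w i) (fun _ _ => 0) (fun _ => 0) (fun i j => w i * z j) ∧
    ∃ e : Idx m n ≃ (Unit ⊕ Fin n) ⊕ (Unit ⊕ Fin m),
      ((M ^ 2)ᴴ * M ^ 2).submatrix e.symm e.symm =
        Matrix.fromBlocks (r • A) 0 0 (h • B) :=
  dsM_sq_gram_perm_similar_general a b x y z w hxy hzw
end

section
/- Let M be the double star block matrix with xᵀy ≠ 0, zᵀw = 0, a, b ≠ 0, ζ := xᵀy + ab ≠ 0, and suppose h := bb̄ + y*y ≠ 0 and β := ζζ̄ + bb̄·w*w ≠ 0. Then X = [[0, h⁻¹y*, h⁻¹b̄, 0],[β⁻¹ζ̄y, 0, 0, β⁻¹b̄yw*],[β⁻¹ζ̄b, 0, 0, β⁻¹bb̄w*],[0, bh⁻¹ζ⁻¹wy*, bb̄h⁻¹ζ⁻¹w, 0]] is the core EP inverse of M: X M⁴ = M³, M X² = X, and (MX)* = MX. -/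
open Matrix BigOperators

/-!
Everything is block multiplication in the 4×4 block structure. Because `zᵀw = 0`,
`M² = [[ζ, 0, 0, a zᵀ], [0, y xᵀ, a y, 0], [0, b xᵀ, ab, 0], [b w, 0, 0, w zᵀ]]` with
`ζ = xᵀy + ab`, which gives closed forms of `M³` and `M⁴`. In the products with `X` the only
inner products left are `y*y` and `w*w`, and they are absorbed by the normalisations
`h = b b̄ + y*y` and `β = ζ ζ̄ + b b̄ w*w`. The product `M X` is the Hermitian matrix

    P = [[β⁻¹ζζ̄, 0, 0, β⁻¹b̄ζ w*], [0, h⁻¹yy*, h⁻¹b̄ y, 0],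
         [0, h⁻¹b y*, h⁻¹bb̄, 0], [β⁻¹ζ̄b w, 0, 0, β⁻¹bb̄ ww*]],

the orthogonal projector onto the range of `M³`, and `P X = X`.
-/

section

variable {m n : ℕ}

/-- `blk` with the square and rectangular blocks typed as matrices, so that products of blocks
are matrix products. -/
def blockMat
    (A11 : ℂ) (A12 : Fin m → ℂ) (A13 : ℂ) (A14 : Fin n → ℂ)
    (A21 : Fin m → ℂ) (A22 : Matrix (Fin m) (Fin m) ℂ) (A23 : Fin m → ℂ)
    (A24 : Matrix (Fin m) (Fin n) ℂ)
    (A31 : ℂ) (A32 : Fin m → ℂ) (A33 : ℂ) (A34 : Fin n → ℂ)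
    (A41 : Fin n → ℂ) (A42 : Matrix (Fin n) (Fin m) ℂ) (A43 : Fin n → ℂ)
    (A44 : Matrix (Fin n) (Fin n) ℂ) : Matrix (Idx m n) (Idx m n) ℂ :=
  blk A11 A12 A13 A14 A21 A22 A23 A24 A31 A32 A33 A34 A41 A42 A43 A44

theorem blockMat_mul_blockMat
    (A11 : ℂ) (A12 : Fin m → ℂ) (A13 : ℂ) (A14 : Fin n → ℂ)
    (A21 : Fin m → ℂ) (A22 : Matrix (Fin m) (Fin m) ℂ) (A23 : Fin m → ℂ)
    (A24 : Matrix (Fin m) (Fin n) ℂ)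
    (A31 : ℂ) (A32 : Fin m → ℂ) (A33 : ℂ) (A34 : Fin n → ℂ)
    (A41 : Fin n → ℂ) (A42 : Matrix (Fin n) (Fin m) ℂ) (A43 : Fin n → ℂ)
    (A44 : Matrix (Fin n) (Fin n) ℂ)
    (B11 : ℂ) (B12 : Fin m → ℂ) (B13 : ℂ) (B14 : Fin n → ℂ)
    (B21 : Fin m → ℂ) (B22 : Matrix (Fin m) (Fin m) ℂ) (B23 : Fin m → ℂ)
    (B24 : Matrix (Fin m) (Fin n) ℂ)
    (B31 : ℂ) (B32 : Fin m → ℂ) (B33 : ℂ) (B34 : Fin n → ℂ)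
    (B41 : Fin n → ℂ) (B42 : Matrix (Fin n) (Fin m) ℂ) (B43 : Fin n → ℂ)
    (B44 : Matrix (Fin n) (Fin n) ℂ) :
    blockMat A11 A12 A13 A14 A21 A22 A23 A24 A31 A32 A33 A34 A41 A42 A43 A44 *
        blockMat B11 B12 B13 B14 B21 B22 B23 B24 B31 B32 B33 B34 B41 B42 B43 B44 =
      blockMat (A11 * B11 + A12 ⬝ᵥ B21 + A13 * B31 + A14 ⬝ᵥ B41)
        (A11 • B12 + A12 ᵥ* B22 + A13 • B32 + A14 ᵥ* B42)
        (A11 * B13 + A12 ⬝ᵥ B23 + A13 * B33 + A14 ⬝ᵥ B43)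
        (A11 • B14 + A12 ᵥ* B24 + A13 • B34 + A14 ᵥ* B44)
        (B11 • A21 + A22 *ᵥ B21 + B31 • A23 + A24 *ᵥ B41)
        (vecMulVec A21 B12 + A22 * B22 + vecMulVec A23 B32 + A24 * B42)
        (B13 • A21 + A22 *ᵥ B23 + B33 • A23 + A24 *ᵥ B43)
        (vecMulVec A21 B14 + A22 * B24 + vecMulVec A23 B34 + A24 * B44)
        (A31 * B11 + A32 ⬝ᵥ B21 + A33 * B31 + A34 ⬝ᵥ B41)
        (A31 • B12 + A32 ᵥ* B22 + A33 • B32 + A34 ᵥ* B42)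
        (A31 * B13 + A32 ⬝ᵥ B23 + A33 * B33 + A34 ⬝ᵥ B43)
        (A31 • B14 + A32 ᵥ* B24 + A33 • B34 + A34 ᵥ* B44)
        (B11 • A41 + A42 *ᵥ B21 + B31 • A43 + A44 *ᵥ B41)
        (vecMulVec A41 B12 + A42 * B22 + vecMulVec A43 B32 + A44 * B42)
        (B13 • A41 + A42 *ᵥ B23 + B33 • A43 + A44 *ᵥ B43)
        (vecMulVec A41 B14 + A42 * B24 + vecMulVec A43 B34 + A44 * B44) := by
  ext ((_ | i) | (_ | i)) ((_ | j) | (_ | j)) <;>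
    simp only [blockMat, blk, mul_apply, of_apply, Fintype.sum_sum_type, Fintype.sum_unique,
      dotProduct, vecMul, mulVec, vecMulVec, Pi.add_apply, Pi.smul_apply, smul_eq_mul,
      Matrix.add_apply] <;>
    ring

theorem blockMat_conjTranspose
    (A11 : ℂ) (A12 : Fin m → ℂ) (A13 : ℂ) (A14 : Fin n → ℂ)
    (A21 : Fin m → ℂ) (A22 : Matrix (Fin m) (Fin m) ℂ) (A23 : Fin m → ℂ)
    (A24 : Matrix (Fin m) (Fin n) ℂ)
    (A31 : ℂ) (A32 : Fin m → ℂ) (A33 : ℂ) (A34 : Fin n → ℂ)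
    (A41 : Fin n → ℂ) (A42 : Matrix (Fin n) (Fin m) ℂ) (A43 : Fin n → ℂ)
    (A44 : Matrix (Fin n) (Fin n) ℂ) :
    (blockMat A11 A12 A13 A14 A21 A22 A23 A24 A31 A32 A33 A34 A41 A42 A43 A44)ᴴ =
      blockMat (star A11) (star A21) (star A31) (star A41) (star A12) A22ᴴ (star A32) A42ᴴ
        (star A13) (star A23) (star A33) (star A43) (star A14) A24ᴴ (star A34) A44ᴴ := by
  ext ((_ | i) | (_ | i)) ((_ | j) | (_ | j)) <;> rfl

theorem star_star_dotProduct_self {ι α : Type*} [Fintype ι] [NonUnitalSemiring α] [StarRing α]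
    (v : ι → α) : star (star v ⬝ᵥ v) = star v ⬝ᵥ v := by
  rw [← star_dotProduct_star, star_star]

theorem vecMulVec_zero' {ι κ α : Type*} [MulZeroClass α] (u : ι → α) :
    vecMulVec u (0 : κ → α) = 0 :=
  ext fun _ _ => mul_zero _

attribute [local simp] vecMulVec_zero' vecMulVec_mulVec vecMul_vecMulVec vecMulVec_mul_vecMulVec
  op_smul_eq_smul mulVec_smul smul_mulVec vecMul_smul smul_vecMul

variable {a b ζ h β : ℂ} {x y : Fin m → ℂ} {z w : Fin n → ℂ}

theorem dsM_eq_blockMat : dsM a b x y z w = blockMat 0 x a 0 y 0 0 0 b 0 0 z 0 0 w 0 := rfl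

theorem dsM_sq_s15 (hζ : x ⬝ᵥ y + a * b = ζ) (hzw : z ⬝ᵥ w = 0) : dsM a b x y z w ^ 2 =
    blockMat ζ 0 0 (a • z) 0 (vecMulVec y x) (a • y) 0 0 (b • x) (a * b) 0 (b • w) 0 0
      (vecMulVec w z) := by
  rw [sq, dsM_eq_blockMat, blockMat_mul_blockMat]
  simp [← hζ, hzw, mul_comm]

theorem dsM_pow_three (hζ : x ⬝ᵥ y + a * b = ζ) (hzw : z ⬝ᵥ w = 0) : dsM a b x y z w ^ 3 =
    blockMat 0 (ζ • x) (a * ζ) 0 (ζ • y) 0 0 (a • vecMulVec y z) (ζ * b) 0 0 ((a * b) • z)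
      0 (b • vecMulVec w x) ((a * b) • w) 0 := by
  rw [pow_succ, dsM_sq_s15 hζ hzw, dsM_eq_blockMat, blockMat_mul_blockMat]
  subst hζ
  congr 1 <;> simp [hzw] <;> first | ring1 | module

theorem dsM_pow_four (hζ : x ⬝ᵥ y + a * b = ζ) (hzw : z ⬝ᵥ w = 0) : dsM a b x y z w ^ 4 =
    blockMat (ζ ^ 2) 0 0 ((a * ζ) • z) 0 (ζ • vecMulVec y x) ((a * ζ) • y) 0 0 ((b * ζ) • x)
      (a * b * ζ) 0 ((b * ζ) • w) 0 0 ((a * b) • vecMulVec w z) := by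
  rw [show 4 = 2 * 2 from rfl, pow_mul, dsM_sq_s15 hζ hzw, sq, blockMat_mul_blockMat]
  subst hζ
  congr 1 <;> simp [hzw] <;> first | ring1 | module

/-- The matrix `X` of the statement, with entries written so that the two are definitionally
equal. -/
noncomputable def dsCoreEP (b : ℂ) (y : Fin m → ℂ) (w : Fin n → ℂ) (ζ h β : ℂ) :
    Matrix (Idx m n) (Idx m n) ℂ :=
  blockMat 0 (h⁻¹ • star y) (h⁻¹ * star b) 0 ((β⁻¹ * star ζ) • y) 0 0
    (vecMulVec ((β⁻¹ * star b) • y) (star w)) (β⁻¹ * star ζ * b) 0 0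
    ((β⁻¹ * b * star b) • star w) 0 (vecMulVec ((b * h⁻¹ * ζ⁻¹) • w) (star y))
    ((b * star b * h⁻¹ * ζ⁻¹) • w) 0

theorem dsCoreEP_mul_dsM_pow_four (hζ : x ⬝ᵥ y + a * b = ζ) (hζ0 : ζ ≠ 0) (hzw : z ⬝ᵥ w = 0)
    (hh : b * star b + star y ⬝ᵥ y = h) (hh0 : h ≠ 0)
    (hβ : ζ * star ζ + b * star b * (star w ⬝ᵥ w) = β) (hβ0 : β ≠ 0) :
    dsCoreEP b y w ζ h β * dsM a b x y z w ^ 4 = dsM a b x y z w ^ 3 := by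
  rw [dsM_pow_four hζ hzw, dsM_pow_three hζ hzw, dsCoreEP, blockMat_mul_blockMat]
  subst hh hβ
  -- `simp` rewrites `star` on `ℂ` to `conj`; `grind` needs the hypotheses in the same form.
  simp only [RCLike.star_def] at hh0 hβ0
  congr 1 <;> simp <;> first | grind | (match_scalars; grind)

noncomputable def dsCoreEPProj (b : ℂ) (y : Fin m → ℂ) (w : Fin n → ℂ) (ζ h β : ℂ) :
    Matrix (Idx m n) (Idx m n) ℂ :=
  blockMat (β⁻¹ * (ζ * star ζ)) 0 0 ((β⁻¹ * star b * ζ) • star w) 0 (h⁻¹ • vecMulVec y (star y))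
    ((h⁻¹ * star b) • y) 0 0 ((h⁻¹ * b) • star y) (h⁻¹ * (b * star b)) 0
    ((β⁻¹ * star ζ * b) • w) 0 0 ((β⁻¹ * b * star b) • vecMulVec w (star w))

theorem dsM_mul_dsCoreEP (hζ : x ⬝ᵥ y + a * b = ζ) (hζ0 : ζ ≠ 0) (hzw : z ⬝ᵥ w = 0)
    (hh : b * star b + star y ⬝ᵥ y = h) (hh0 : h ≠ 0)
    (hβ : ζ * star ζ + b * star b * (star w ⬝ᵥ w) = β) (hβ0 : β ≠ 0) :
    dsM a b x y z w * dsCoreEP b y w ζ h β = dsCoreEPProj b y w ζ h β := by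
  rw [dsM_eq_blockMat, dsCoreEP, dsCoreEPProj, blockMat_mul_blockMat]
  subst hζ hh hβ
  simp only [RCLike.star_def] at hh0 hβ0
  congr 1 <;> simp [hzw] <;> first | grind | (match_scalars; grind)

theorem dsCoreEPProj_mul_dsCoreEP (hζ0 : ζ ≠ 0)
    (hh : b * star b + star y ⬝ᵥ y = h) (hh0 : h ≠ 0)
    (hβ : ζ * star ζ + b * star b * (star w ⬝ᵥ w) = β) (hβ0 : β ≠ 0) :
    dsCoreEPProj b y w ζ h β * dsCoreEP b y w ζ h β = dsCoreEP b y w ζ h β := by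
  rw [dsCoreEP, dsCoreEPProj, blockMat_mul_blockMat]
  subst hh hβ
  simp only [RCLike.star_def] at hh0 hβ0
  congr 1 <;> simp <;> first | grind | (match_scalars; grind)

theorem dsCoreEPProj_conjTranspose (hh : b * star b + star y ⬝ᵥ y = h)
    (hβ : ζ * star ζ + b * star b * (star w ⬝ᵥ w) = β) :
    (dsCoreEPProj b y w ζ h β)ᴴ = dsCoreEPProj b y w ζ h β := by
  have hh_star : star h = h := by
    rw [← hh, star_add, star_mul', star_star, star_star_dotProduct_self, mul_comm]
  have hβ_star : star β = β := by
    rw [← hβ, star_add, star_mul', star_mul', star_mul', star_star, star_star,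
      star_star_dotProduct_self]
    ring
  rw [dsCoreEPProj, blockMat_conjTranspose]
  simp only [star_zero, star_mul', star_inv₀, star_star, hh_star, hβ_star, star_smul,
    conjTranspose_zero, conjTranspose_smul, conjTranspose_vecMulVec]
  congr 1 <;> first | ring1 | module

def IsCoreEPInverse {ι R : Type*} [Fintype ι] [DecidableEq ι] [Semiring R] [Star R]
    (A X : Matrix ι ι R) (k : ℕ) : Prop :=
  X * A ^ (k + 1) = A ^ k ∧ A * X ^ 2 = X ∧ (A * X)ᴴ = A * X

theorem isCoreEPInverse_dsCoreEP (hζ : x ⬝ᵥ y + a * b = ζ) (hζ0 : ζ ≠ 0) (hzw : z ⬝ᵥ w = 0)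
    (hh : b * star b + star y ⬝ᵥ y = h) (hh0 : h ≠ 0)
    (hβ : ζ * star ζ + b * star b * (star w ⬝ᵥ w) = β) (hβ0 : β ≠ 0) :
    IsCoreEPInverse (dsM a b x y z w) (dsCoreEP b y w ζ h β) 3 := by
  refine ⟨dsCoreEP_mul_dsM_pow_four hζ hζ0 hzw hh hh0 hβ hβ0, ?_, ?_⟩
  · rw [sq, ← Matrix.mul_assoc, dsM_mul_dsCoreEP hζ hζ0 hzw hh hh0 hβ hβ0,
      dsCoreEPProj_mul_dsCoreEP hζ0 hh hh0 hβ hβ0]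
  · rw [dsM_mul_dsCoreEP hζ hζ0 hzw hh hh0 hβ hβ0]
    exact dsCoreEPProj_conjTranspose hh hβ

end

theorem dsM_coreEP_caseII_general {m n : ℕ} (a b : ℂ)
    (x y : Fin m → ℂ) (z w : Fin n → ℂ)
    (hzw : dotT z w = 0)
    (hζ : dotT x y + a * b ≠ 0)
    (hh : b * star b + gram y ≠ 0)
    (hβ : (dotT x y + a * b) * star (dotT x y + a * b) + b * star b * gram w ≠ 0) :
    letI ζ := dotT x y + a * b
    letI M := dsM a b x y z w
    letI h := b * star b + gram y
    letI β := ζ * star ζ + b * star b * gram w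
    letI X := blk 0 (fun j => h⁻¹ * star (y j)) (h⁻¹ * star b) (fun _ => 0)
        (fun i => β⁻¹ * star ζ * y i) (fun _ _ => 0) (fun _ => 0)
          (fun i j => β⁻¹ * star b * y i * star (w j))
        (β⁻¹ * star ζ * b) (fun _ => 0) 0 (fun j => β⁻¹ * b * star b * star (w j))
        (fun _ => 0) (fun i j => b * h⁻¹ * ζ⁻¹ * w i * star (y j))
          (fun i => b * star b * h⁻¹ * ζ⁻¹ * w i) (fun _ _ => 0)
    X * M ^ 4 = M ^ 3 ∧ M * X ^ 2 = X ∧ (M * X)ᴴ = M * X :=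
  isCoreEPInverse_dsCoreEP rfl hζ hzw rfl hh rfl hβ

theorem dsM_coreEP_caseII {m n : ℕ} (a b : ℂ) (ha : a ≠ 0) (hb : b ≠ 0)
    (x y : Fin m → ℂ) (z w : Fin n → ℂ)
    (hxy : dotT x y ≠ 0) (hzw : dotT z w = 0)
    (hζ : dotT x y + a * b ≠ 0)
    (hh : b * star b + gram y ≠ 0)
    (hβ : (dotT x y + a * b) * star (dotT x y + a * b) + b * star b * gram w ≠ 0) :
    letI ζ := dotT x y + a * b
    letI M := dsM a b x y z w
    letI h := b * star b + gram y
    letI β := ζ * star ζ + b * star b * gram w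
    letI X := blk 0 (fun j => h⁻¹ * star (y j)) (h⁻¹ * star b) (fun _ => 0)
        (fun i => β⁻¹ * star ζ * y i) (fun _ _ => 0) (fun _ => 0)
          (fun i j => β⁻¹ * star b * y i * star (w j))
        (β⁻¹ * star ζ * b) (fun _ => 0) 0 (fun j => β⁻¹ * b * star b * star (w j))
        (fun _ => 0) (fun i j => b * h⁻¹ * ζ⁻¹ * w i * star (y j))
          (fun i => b * star b * h⁻¹ * ζ⁻¹ * w i) (fun _ _ => 0)
    X * M ^ 4 = M ^ 3 ∧ M * X ^ 2 = X ∧ (M * X)ᴴ = M * X :=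
  dsM_coreEP_caseII_general a b x y z w hzw hζ hh hβ
end
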